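/- arXiv:1311.0363 — 3 statements merged into one kernel-verified Lean document; each statement's English description precedes it below -/
import Mathlib

section
/- Let λx.F be a closed term and suppose x ∉ βΩ(F), i.e. there is a term t' with F ▷_{βΩ}* t' in which x does not occur. Then F[x:=u] ≃ F[x:=v] for all closed terms u, v; hence the range of λx.F in H is a singleton. -/
/-! ## A de Bruijn presentation of the untyped λ-calculus -/

/-- Untyped λ-terms in de Bruijn representation. -/
inductive Lam : Type where
  | var : ℕ → Lam
  | app : Lam → Lam → Lam
  | abs : Lam → Lam
  deriving DecidableEq

namespace Lam

/-- Lifting of de Bruijn indices (cutoff `d`). -/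
def lift (d : ℕ) : Lam → Lam
  | var n => if n < d then var n else var (n + 1)
  | app a b => app (lift d a) (lift d b)
  | abs a => abs (lift (d + 1) a)

/-- Capture-avoiding substitution of `u` for the free variable `k`. -/
def subst : Lam → ℕ → Lam → Lam
  | var n, k, u => if n = k then u else if k < n then var (n - 1) else var n
  | app a b, k, u => app (subst a k u) (subst b k u)
  | abs a, k, u => abs (subst a (k + 1) (lift 0 u))

/-- One-step β-reduction `▷`. -/
inductive Step : Lam → Lam → Prop
  | beta (a b : Lam) : Step (app (abs a) b) (subst a 0 b)
  | appL {a a' : Lam} (b : Lam) : Step a a' → Step (app a b) (app a' b)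
  | appR (a : Lam) {b b' : Lam} : Step b b' → Step (app a b) (app a b')
  | abs {a a' : Lam} : Step a a' → Step (Lam.abs a) (Lam.abs a')

/-- β-reduction `▷*` : reflexive and transitive closure of `▷`. -/
def Steps : Lam → Lam → Prop := Relation.ReflTransGen Step

/-- β-normal term. -/
def Normal (t : Lam) : Prop := ∀ t', ¬ Step t t'

/-- `Free x t` : the variable `x` (de Bruijn index, seen from the root) occurs free in `t`. -/
def Free : ℕ → Lam → Prop
  | x, var n => x = n
  | x, app a b => Free x a ∨ Free x b
  | x, abs a => Free (x + 1) a

/-- Closed term. -/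
def Closed (t : Lam) : Prop := ∀ x, ¬ Free x t

/-- A variable applied to a (possibly empty) list of arguments. -/
inductive HeadVarApp : Lam → Prop
  | var (n : ℕ) : HeadVarApp (var n)
  | app {a : Lam} (b : Lam) : HeadVarApp a → HeadVarApp (app a b)

/-- Head normal forms `λx₁…λxₙ.(y t₁ … tₘ)`. -/
inductive IsHNF : Lam → Prop
  | head {t : Lam} : HeadVarApp t → IsHNF t
  | abs {a : Lam} : IsHNF a → IsHNF (Lam.abs a)

/-- A term is solvable if it β-reduces to a head normal form. -/
def Solvable (t : Lam) : Prop := ∃ h, Steps t h ∧ IsHNF h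

/-- `Ω = (λx.(x x))(λx.(x x))`. -/
def Omega : Lam := app (abs (app (var 0) (var 0))) (abs (app (var 0) (var 0)))

/-- Ω-reduction `▷_Ω` : replace an unsolvable subterm by `Ω`. -/
inductive OmegaStep : Lam → Lam → Prop
  | unsolv {t : Lam} : ¬ Solvable t → OmegaStep t Omega
  | appL {a a' : Lam} (b : Lam) : OmegaStep a a' → OmegaStep (app a b) (app a' b)
  | appR (a : Lam) {b b' : Lam} : OmegaStep b b' → OmegaStep (app a b) (app a b')
  | abs {a a' : Lam} : OmegaStep a a' → OmegaStep (Lam.abs a) (Lam.abs a')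

/-- `▷_Ω*`. -/
def OmegaSteps : Lam → Lam → Prop := Relation.ReflTransGen OmegaStep

/-- `▷_{βΩ}` : union of `▷` and `▷_Ω`. -/
def BOStep (t t' : Lam) : Prop := Step t t' ∨ OmegaStep t t'

/-- `▷_{βΩ}*`. -/
def BOSteps : Lam → Lam → Prop := Relation.ReflTransGen BOStep

/-- `u ≃ v` : equality in the λ-theory H (common `▷_{βΩ}*`-reduct). -/
def SimH (u v : Lam) : Prop := ∃ w, BOSteps u w ∧ BOSteps v w

/-- Simultaneous (parallel) substitution along `σ`. -/
def psubst (σ : ℕ → Lam) : Lam → Lam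
  | var n => σ n
  | app a b => app (psubst σ a) (psubst σ b)
  | abs a => abs (psubst (fun n => match n with | 0 => var 0 | m + 1 => lift 0 (σ m)) a)

/-- `(x V)` : the application of a head `h` to a list of arguments. -/
def mkApps (h : Lam) (as : List Lam) : Lam := as.foldl app h

/-- `U ⊑ V` : some initial segment of `V` is obtained from `U` by a substitution
followed by componentwise β-reductions. -/
def Sqsubseteq (U V : List Lam) : Prop :=
  ∃ (σ : ℕ → Lam) (W : List Lam), W <+: V ∧
    List.Forall₂ (fun u w => Steps (psubst σ u) w) U W

/-! ### Occurrences as positions -/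

/-- Directions inside a term. -/
inductive Dir : Type where
  | left | right | down
  deriving DecidableEq

/-- Positions (occurrences) in a term. -/
abbrev Pos := List Dir

/-- The subterm of `t` at position `p` (if any). -/
def subtermAt : Lam → Pos → Option Lam
  | t, [] => some t
  | app a _, Dir.left :: p => subtermAt a p
  | app _ b, Dir.right :: p => subtermAt b p
  | abs a, Dir.down :: p => subtermAt a p
  | _, _ :: _ => none

/-- Replace the subterm of `t` at position `p` by `s` (if the position exists). -/
def replaceAt : Lam → Pos → Lam → Option Lam
  | _, [], s => some s
  | app a b, Dir.left :: p, s => (replaceAt a p s).map (fun a' => app a' b)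
  | app a b, Dir.right :: p, s => (replaceAt b p s).map (fun b' => app a b')
  | abs a, Dir.down :: p, s => (replaceAt a p s).map Lam.abs
  | _, _ :: _, _ => none

/-- `OccOf x t p` : position `p` is an occurrence in `t` of the free variable `x`
(index seen from the root, hence shifted by the number of binders crossed). -/
def OccOf (x : ℕ) (t : Lam) (p : Pos) : Prop :=
  subtermAt t p = some (var (x + p.count Dir.down))

/-- `ArgOf t p V` : `V` is the maximal list of arguments, in `t`, of the occurrence
sitting at position `p`; i.e. `([] V)` is the applicative context of that occurrence. -/
def ArgOf (t : Lam) (p : Pos) (V : List Lam) : Prop :=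
  ∃ (q : Pos) (h : Lam),
    p = q ++ List.replicate V.length Dir.left ∧
    (∀ q' : Pos, q ≠ q' ++ [Dir.left]) ∧
    subtermAt t q = some (mkApps h V) ∧ subtermAt t p = some h

/-- `InArgOfOcc x t p q` : `q` is an occurrence of `x` in `t` and the position `p` lies
inside one of the elements of `Arg(x_[q], t)`. -/
def InArgOfOcc (x : ℕ) (t : Lam) (p q : Pos) : Prop :=
  OccOf x t q ∧ ∃ (r : Pos) (n : ℕ),
    q = r ++ List.replicate n Dir.left ∧
    (∀ r' : Pos, r ≠ r' ++ [Dir.left]) ∧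
    ∃ (j : ℕ) (s : Pos), j < n ∧ p = r ++ List.replicate j Dir.left ++ Dir.right :: s

/-- The occurrence `p` of `x` is pure in `t` : no other occurrence `q` of `x` in `t`
is such that `p` occurs in one of the elements of `Arg(x_[q], t)`. -/
def PureOcc (x : ℕ) (t : Lam) (p : Pos) : Prop :=
  OccOf x t p ∧ ∀ q, q ≠ p → ¬ InArgOfOcc x t p q

/-- Renaming of the free variable `y` into `x`. -/
def rename (y x : ℕ) : Lam → Lam
  | var n => if n = y then var x else var n
  | app a b => app (rename y x a) (rename y x b)
  | abs a => abs (rename (y + 1) (x + 1) a)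

/-- `Residue x u v p p'` : along some β-reduction from `u` to `v`, the occurrence `p'` of
`x` in `v` is a residue (traced copy) of the occurrence `p` of `x` in `u`.  This is
expressed by marking the occurrence `p` of `x` with a fresh variable `y` and tracing the
occurrences of `y`. -/
def Residue (x : ℕ) (u v : Lam) (p p' : Pos) : Prop :=
  ∃ (y : ℕ) (u₀ v₀ : Lam),
    ¬ Free y u ∧
    replaceAt u p (var (y + p.count Dir.down)) = some u₀ ∧
    Steps u₀ v₀ ∧ rename y x v₀ = v ∧ OccOf y v₀ p'

/-- The occurrence `p` of the free variable `0` ("x") in `G` is good with respect to the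
closed term `A` : it is pure in `G` and `u[x:=A]` is solvable for every subterm `u` of
`G` in which this occurrence occurs. -/
def GoodOcc (A G : Lam) (p : Pos) : Prop :=
  PureOcc 0 G p ∧
    ∀ (q : Pos) (u : Lam), q <+: p → subtermAt G q = some u →
      Solvable (subst u (q.count Dir.down) A)

/-! ### Miscellaneous -/

/-- A fixed effective Gödel numbering of λ-terms. -/
def code : Lam → ℕ
  | var n => Nat.pair 0 n
  | app a b => Nat.pair 1 (Nat.pair (code a) (code b))
  | abs a => Nat.pair 2 (code a)

/-- Body `f^k z` of the Church numeral. -/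
def churchBody : ℕ → Lam
  | 0 => var 0
  | k + 1 => app (var 1) (churchBody k)

/-- The Church numeral `c_k = λf λz.(f^k z)`. -/
def church (k : ℕ) : Lam := abs (abs (churchBody k))

/-- `n`-fold abstraction `λx₁…λxₙ.t`. -/
def absN : ℕ → Lam → Lam
  | 0, t => t
  | n + 1, t => abs (absN n t)

/-- Number of symbols of a term. -/
def size : Lam → ℕ
  | var _ => 1
  | app a b => size a + size b + 1
  | abs a => size a + 1

/-- Subterm relation. -/
inductive Subterm : Lam → Lam → Prop
  | refl (t : Lam) : Subterm t t
  | appL {s a : Lam} (b : Lam) : Subterm s a → Subterm s (app a b)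
  | appR (a : Lam) {s b : Lam} : Subterm s b → Subterm s (app a b)
  | abs {s a : Lam} : Subterm s a → Subterm s (Lam.abs a)

/-- `t` contains no subterm of the form `(x u)` for the free variable `x`. -/
def NoVarApp : ℕ → Lam → Prop
  | _, var _ => True
  | x, app a b => a ≠ var x ∧ NoVarApp x a ∧ NoVarApp x b
  | x, abs a => NoVarApp (x + 1) a

/-- Headed by the variable `d` : term of the form `(x V)` with `x = var d`. -/
inductive Headed : ℕ → Lam → Prop
  | var (d : ℕ) : Headed d (var d)
  | app {d : ℕ} {a : Lam} (b : Lam) : Headed d a → Headed d (app a b)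

end Lam

/-! Substitution commutes with `▷_{βΩ}`. For β-steps this is the usual substitution lemma.
For Ω-steps one needs that unsolvability is stable under substitution, i.e. that `s` is
solvable as soon as `s[x:=u]` is. Head reduction commutes with substitution, so an infinite
head reduction of `s` yields one of `s[x:=u]`; and by the standardization theorem (in
Kashima's inductive form) a term with a head normal form has a terminating head reduction.
Hence `F ▷_{βΩ}* t'` gives `F[x:=u] ▷_{βΩ}* t'[x:=u] = t'[x:=v] ◁_{βΩ}* F[x:=v]` when `x`
does not occur in `t'`. -/

namespace Lam

theorem lift_lift (t : Lam) {i j : ℕ} (h : i ≤ j) :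
    lift i (lift j t) = lift (j + 1) (lift i t) := by
  induction t generalizing i j with
  | var n =>
      simp only [lift]
      split_ifs <;> simp only [lift] <;> split_ifs <;> first | rfl | omega
  | app a b iha ihb => simp only [lift, iha h, ihb h]
  | abs a ih => simp only [lift, ih (Nat.succ_le_succ h)]

theorem lift_subst_of_le (t q : Lam) {k d : ℕ} (h : k ≤ d) :
    lift d (subst t k q) = subst (lift (d + 1) t) k (lift d q) := by
  induction t generalizing k d q with
  | var n =>
      simp only [subst, lift]
      split_ifs <;> simp only [subst, lift] <;> split_ifs <;>
        first | rfl | omega | (congr 1; omega)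
  | app a b iha ihb => simp only [lift, subst, iha q h, ihb q h]
  | abs a ih =>
      simp only [lift, subst, ih (lift 0 q) (Nat.succ_le_succ h),
        lift_lift q (Nat.zero_le d)]

theorem lift_subst_of_ge (t u : Lam) {d k : ℕ} (h : d ≤ k) :
    lift d (subst t k u) = subst (lift d t) (k + 1) (lift d u) := by
  induction t generalizing d k u with
  | var n =>
      simp only [subst, lift]
      split_ifs <;> simp only [subst, lift] <;> (try split_ifs) <;>
        first | rfl | omega | (congr 1; omega)
  | app a b iha ihb => simp only [lift, subst, iha u h, ihb u h]
  | abs a ih =>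
      simp only [lift, subst, lift_lift u (Nat.zero_le d), ih (lift 0 u) (Nat.succ_le_succ h)]

@[simp]
theorem subst_lift (t u : Lam) (k : ℕ) : subst (lift k t) k u = t := by
  induction t generalizing k u with
  | var n =>
      simp only [lift]
      split_ifs <;> simp only [subst] <;> split_ifs <;> first | rfl | omega
  | app a b iha ihb => simp only [lift, subst, iha, ihb]
  | abs a ih => simp only [lift, subst, ih]

theorem subst_subst (t q u : Lam) {i k : ℕ} (h : i ≤ k) :
    subst (subst t i q) k u = subst (subst t (k + 1) (lift i u)) i (subst q k u) := by
  induction t generalizing i k q u with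
  | var n =>
      simp only [subst]
      split_ifs <;> simp only [subst, subst_lift] <;> (try split_ifs) <;> first | rfl | omega
  | app a b iha ihb => simp only [subst, iha q u h, ihb q u h]
  | abs a ih =>
      simp only [subst, ih (lift 0 q) (lift 0 u) (Nat.succ_le_succ h),
        lift_lift u (Nat.zero_le i), lift_subst_of_ge q u (Nat.zero_le k)]

theorem subst_beta (p q u : Lam) (k : ℕ) :
    subst (subst p 0 q) k u = subst (subst p (k + 1) (lift 0 u)) 0 (subst q k u) :=
  subst_subst p q u (Nat.zero_le k)

theorem subst_eq_subst_of_not_free {t : Lam} {k : ℕ} (hk : ¬ Free k t) (u v : Lam) :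
    subst t k u = subst t k v := by
  induction t generalizing k u v with
  | var n =>
      have hnk : n ≠ k := fun e => hk e.symm
      simp only [subst, if_neg hnk]
  | app a b iha ihb =>
      simp only [Free, not_or] at hk
      simp only [subst, iha hk.1 u v, ihb hk.2 u v]
  | abs a ih =>
      simp only [subst]
      exact congrArg Lam.abs (ih (k := k + 1) hk _ _)

def headStep : Lam → Option Lam
  | var _ => none
  | abs a => (headStep a).map Lam.abs
  | app (abs p) q => some (subst p 0 q)
  | app (var _) _ => none
  | app (app a b) c => (headStep (app a b)).map (fun x => app x c)

theorem HeadVarApp.headStep_eq_none {t : Lam} (h : HeadVarApp t) : headStep t = none := by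
  induction h with
  | var n => rfl
  | app b h ih => cases h <;> simp_all [headStep]

theorem headVarApp_of_headStep_eq_none {t : Lam} (h : headStep t = none) (ht : ∀ a, t ≠ abs a) :
    HeadVarApp t := by
  induction t with
  | var n => exact .var n
  | abs a _ => exact absurd rfl (ht a)
  | app a b iha _ =>
      match a, h, iha with
      | var n, _, _ => exact .app b (.var n)
      | app a₁ a₂, h, iha =>
          simp only [headStep, Option.map_eq_none_iff] at h
          exact .app b (iha h fun _ => Lam.noConfusion)

theorem isHNF_of_headStep_eq_none {t : Lam} (h : headStep t = none) : IsHNF t := by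
  induction t with
  | abs a ih =>
      simp only [headStep, Option.map_eq_none_iff] at h
      exact .abs (ih h)
  | _ => exact .head (headVarApp_of_headStep_eq_none h fun _ => Lam.noConfusion)

theorem step_of_headStep_eq_some {t t' : Lam} (h : headStep t = some t') : Step t t' := by
  induction t generalizing t' with
  | var n => simp [headStep] at h
  | abs a ih =>
      obtain ⟨x, hx, rfl⟩ := Option.map_eq_some_iff.mp h
      exact .abs (ih hx)
  | app a b iha _ =>
      match a, h with
      | abs p, h => cases h; exact .beta p b
      | var n, h => simp [headStep] at h
      | app a₁ a₂, h =>
          obtain ⟨x, hx, rfl⟩ := Option.map_eq_some_iff.mp h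
          exact .appL b (iha hx)

theorem headStep_subst {t t' : Lam} (h : headStep t = some t') (k : ℕ) (u : Lam) :
    headStep (subst t k u) = some (subst t' k u) := by
  induction t generalizing t' k u with
  | var n => simp [headStep] at h
  | abs a ih =>
      obtain ⟨x, hx, rfl⟩ := Option.map_eq_some_iff.mp h
      simp only [subst, headStep, ih hx (k + 1) (lift 0 u), Option.map_some]
  | app a b iha _ =>
      match a, h with
      | abs p, h => cases h; simp only [subst, headStep, subst_beta]
      | var n, h => simp [headStep] at h
      | app a₁ a₂, h =>
          obtain ⟨x, hx, rfl⟩ := Option.map_eq_some_iff.mp h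
          have ih := iha hx k u
          simp only [subst] at ih ⊢
          simp only [headStep, ih, Option.map_some]

inductive HeadNormalizing : Lam → Prop
  | hnf {t : Lam} : headStep t = none → HeadNormalizing t
  | step {t t' : Lam} : headStep t = some t' → HeadNormalizing t' → HeadNormalizing t

theorem HeadNormalizing.of_subst {t : Lam} {k : ℕ} {u : Lam}
    (h : HeadNormalizing (subst t k u)) : HeadNormalizing t := by
  generalize hs : subst t k u = s at h
  induction h generalizing t with
  | hnf hn =>
      cases ht : headStep t with
      | none => exact .hnf ht
      | some t' => simp [← hs, headStep_subst ht] at hn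
  | step hst _ ih =>
      cases ht : headStep t with
      | none => exact .hnf ht
      | some t' =>
          rw [← hs, headStep_subst ht] at hst
          exact .step ht (ih (Option.some.inj hst))

theorem HeadNormalizing.solvable {t : Lam} (h : HeadNormalizing t) : Solvable t := by
  induction h with
  | hnf hn => exact ⟨_, .refl, isHNF_of_headStep_eq_none hn⟩
  | step hs _ ih =>
      obtain ⟨w, hw, hhnf⟩ := ih
      exact ⟨w, .head (step_of_headStep_eq_some hs) hw, hhnf⟩

theorem HeadNormalizing.abs {t : Lam} (h : HeadNormalizing t) : HeadNormalizing (abs t) := by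
  induction h with
  | hnf hn => exact .hnf (by simp [headStep, hn])
  | step hs _ ih => exact .step (by simp [headStep, hs]) ih

inductive WeakHeadStep : Lam → Lam → Prop
  | beta (p q : Lam) : WeakHeadStep (app (abs p) q) (subst p 0 q)
  | appL {a a' : Lam} (b : Lam) : WeakHeadStep a a' → WeakHeadStep (app a b) (app a' b)

def WeakHeadSteps : Lam → Lam → Prop := Relation.ReflTransGen WeakHeadStep

theorem WeakHeadStep.headStep_eq {a a' : Lam} (h : WeakHeadStep a a') : headStep a = some a' := by
  induction h with
  | beta p q => rfl
  | appL b h ih =>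
      cases h with
      | beta p q => rfl
      | appL c _ => simp only [headStep, ih, Option.map_some]

theorem WeakHeadStep.lift {a a' : Lam} (h : WeakHeadStep a a') (d : ℕ) :
    WeakHeadStep (Lam.lift d a) (Lam.lift d a') := by
  induction h with
  | beta p q =>
      rw [lift_subst_of_le p q (Nat.zero_le d)]
      exact .beta _ _
  | appL b _ ih => exact .appL _ ih

theorem WeakHeadStep.subst {a a' : Lam} (h : WeakHeadStep a a') (k : ℕ) (u : Lam) :
    WeakHeadStep (Lam.subst a k u) (Lam.subst a' k u) := by
  induction h with
  | beta p q =>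
      rw [subst_beta]
      exact .beta _ _
  | appL b _ ih => exact .appL _ ih

namespace WeakHeadSteps

theorem appL {a a' : Lam} (b : Lam) (h : WeakHeadSteps a a') :
    WeakHeadSteps (app a b) (app a' b) :=
  Relation.ReflTransGen.lift (fun x => app x b) (fun _ _ hs => WeakHeadStep.appL b hs) _ _ h

theorem lift {a a' : Lam} (h : WeakHeadSteps a a') (d : ℕ) :
    WeakHeadSteps (Lam.lift d a) (Lam.lift d a') :=
  Relation.ReflTransGen.lift (Lam.lift d) (fun _ _ hs => hs.lift d) _ _ h

theorem subst {a a' : Lam} (h : WeakHeadSteps a a') (k : ℕ) (u : Lam) :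
    WeakHeadSteps (Lam.subst a k u) (Lam.subst a' k u) :=
  Relation.ReflTransGen.lift (Lam.subst · k u) (fun _ _ hs => hs.subst k u) _ _ h

theorem headNormalizing {a a' : Lam} (h : WeakHeadSteps a a') (h' : HeadNormalizing a') :
    HeadNormalizing a := by
  induction h using Relation.ReflTransGen.head_induction_on with
  | refl => exact h'
  | head hs _ ih => exact .step hs.headStep_eq ih

end WeakHeadSteps

/-- Kashima's inductive characterisation of standard reduction: weak head reduction to a
variable, abstraction or application, followed by standard reductions of its parts. -/
inductive StdRed : Lam → Lam → Prop
  | var {M : Lam} {n : ℕ} : WeakHeadSteps M (var n) → StdRed M (var n)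
  | abs {M M₀ N₀ : Lam} : WeakHeadSteps M (abs M₀) → StdRed M₀ N₀ → StdRed M (abs N₀)
  | app {M M₁ M₂ N₁ N₂ : Lam} : WeakHeadSteps M (app M₁ M₂) → StdRed M₁ N₁ → StdRed M₂ N₂ →
      StdRed M (app N₁ N₂)

namespace StdRed

theorem refl (t : Lam) : StdRed t t := by
  induction t with
  | var n => exact .var .refl
  | app a b iha ihb => exact .app .refl iha ihb
  | abs a ih => exact .abs .refl ih

theorem weakHeadSteps_trans {M M' N : Lam} (h : WeakHeadSteps M M') (h' : StdRed M' N) :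
    StdRed M N := by
  cases h' with
  | var h₂ => exact .var (h.trans h₂)
  | abs h₂ h₃ => exact .abs (h.trans h₂) h₃
  | app h₂ h₃ h₄ => exact .app (h.trans h₂) h₃ h₄

theorem lift {a a' : Lam} (h : StdRed a a') (d : ℕ) : StdRed (Lam.lift d a) (Lam.lift d a') := by
  induction h generalizing d with
  | @var M n h₂ =>
      have h₃ := h₂.lift d
      by_cases hnd : n < d <;> simp only [Lam.lift, hnd, if_true, if_false] at h₃ ⊢ <;>
        exact .var h₃
  | abs h₂ _ ih => exact .abs (h₂.lift d) (ih (d + 1))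
  | app h₂ _ _ ih₁ ih₂ => exact .app (h₂.lift d) (ih₁ d) (ih₂ d)

theorem subst {A A' : Lam} (h : StdRed A A') (k : ℕ) {B B' : Lam} (hB : StdRed B B') :
    StdRed (Lam.subst A k B) (Lam.subst A' k B') := by
  induction h generalizing k B B' with
  | @var M n h₂ =>
      have h₃ := h₂.subst k B
      by_cases hnk : n = k
      · subst hnk
        simp only [Lam.subst, if_true] at h₃ ⊢
        exact weakHeadSteps_trans h₃ hB
      · by_cases hkn : k < n <;> simp only [Lam.subst, hnk, hkn, if_true, if_false] at h₃ ⊢ <;>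
          exact .var h₃
  | abs h₂ _ ih => exact .abs (h₂.subst k B) (ih (k + 1) (hB.lift 0))
  | app h₂ _ _ ih₁ ih₂ => exact .app (h₂.subst k B) (ih₁ k hB) (ih₂ k hB)

theorem beta {M P Q : Lam} (h : StdRed M (Lam.app (Lam.abs P) Q)) : StdRed M (Lam.subst P 0 Q) := by
  obtain _ | _ | @⟨_, M₁, M₂, _, _, h₁, h₂, h₃⟩ := h
  obtain _ | @⟨_, P₀, _, h₄, h₅⟩ | _ := h₂
  have hM : WeakHeadSteps M (Lam.subst P₀ 0 M₂) :=
    (h₁.trans (WeakHeadSteps.appL M₂ h₄)).tail (.beta P₀ M₂)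
  exact weakHeadSteps_trans hM (h₅.subst 0 h₃)

theorem step {M N N' : Lam} (h : StdRed M N) (hs : Step N N') : StdRed M N' := by
  induction hs generalizing M with
  | beta => exact h.beta
  | appL _ _ ih =>
      obtain _ | _ | ⟨h₂, h₃, h₄⟩ := h
      exact .app h₂ (ih h₃) h₄
  | appR _ _ ih =>
      obtain _ | _ | ⟨h₂, h₃, h₄⟩ := h
      exact .app h₂ h₃ (ih h₄)
  | abs _ ih =>
      obtain _ | ⟨h₂, h₃⟩ | _ := h
      exact .abs h₂ (ih h₃)

theorem of_steps {M N : Lam} (h : Steps M N) : StdRed M N := by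
  induction h with
  | refl => exact refl M
  | tail _ hs ih => exact ih.step hs

theorem exists_headVarApp {M N : Lam} (h : StdRed M N) (hN : HeadVarApp N) :
    ∃ M', WeakHeadSteps M M' ∧ HeadVarApp M' := by
  induction h with
  | var h₂ => exact ⟨_, h₂, .var _⟩
  | abs => cases hN
  | @app M M₁ M₂ N₁ N₂ h₂ _ _ ih₁ =>
      obtain _ | ⟨_, hN₁⟩ := hN
      obtain ⟨M₁', hM₁, hM₁'⟩ := ih₁ hN₁
      exact ⟨Lam.app M₁' M₂, h₂.trans (WeakHeadSteps.appL M₂ hM₁), .app M₂ hM₁'⟩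

theorem headNormalizing {M N : Lam} (h : StdRed M N) (hN : IsHNF N) : HeadNormalizing M := by
  induction hN generalizing M with
  | head hv =>
      obtain ⟨M', hM, hM'⟩ := h.exists_headVarApp hv
      exact hM.headNormalizing (.hnf hM'.headStep_eq_none)
  | abs _ ih =>
      obtain _ | ⟨h₂, h₃⟩ | _ := h
      exact h₂.headNormalizing (ih h₃).abs

end StdRed

theorem Solvable.headNormalizing {t : Lam} (h : Solvable t) : HeadNormalizing t :=
  let ⟨_, hw, hhnf⟩ := h
  (StdRed.of_steps hw).headNormalizing hhnf

theorem Solvable.of_subst {t : Lam} {k : ℕ} {u : Lam} (h : Solvable (subst t k u)) :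
    Solvable t :=
  h.headNormalizing.of_subst.solvable

theorem Step.subst {a a' : Lam} (h : Step a a') (k : ℕ) (u : Lam) :
    Step (Lam.subst a k u) (Lam.subst a' k u) := by
  induction h generalizing k u with
  | beta p q =>
      rw [subst_beta]
      exact .beta _ _
  | appL b _ ih => exact .appL _ (ih k u)
  | appR a _ ih => exact .appR _ (ih k u)
  | abs _ ih => exact .abs (ih (k + 1) (lift 0 u))

@[simp]
theorem subst_omega (k : ℕ) (u : Lam) : subst Omega k u = Omega := by
  simp [Omega, subst]

theorem OmegaStep.subst {a a' : Lam} (h : OmegaStep a a') (k : ℕ) (u : Lam) :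
    OmegaStep (Lam.subst a k u) (Lam.subst a' k u) := by
  induction h generalizing k u with
  | unsolv hu =>
      rw [subst_omega]
      exact .unsolv fun hs => hu hs.of_subst
  | appL b _ ih => exact .appL _ (ih k u)
  | appR a _ ih => exact .appR _ (ih k u)
  | abs _ ih => exact .abs (ih (k + 1) (lift 0 u))

theorem BOSteps.subst {a a' : Lam} (h : BOSteps a a') (k : ℕ) (u : Lam) :
    BOSteps (Lam.subst a k u) (Lam.subst a' k u) :=
  Relation.ReflTransGen.lift (Lam.subst · k u) (fun _ _ hs => hs.imp (·.subst k u) (·.subst k u)) _ _ h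

theorem simH_subst_of_boSteps {F t : Lam} (hF : BOSteps F t) {k : ℕ} (hk : ¬ Free k t)
    (u v : Lam) : SimH (subst F k u) (subst F k v) :=
  ⟨subst t k u, hF.subst k u, subst_eq_subst_of_not_free hk u v ▸ hF.subst k v⟩

end Lam

open Lam in
theorem range_singleton_general (F : Lam)
    (h : ∃ t', BOSteps F t' ∧ ¬ Free 0 t') :
    (∀ u v, Closed u → Closed v → SimH (subst F 0 u) (subst F 0 v)) ∧
    (Set.range fun u : {u : Lam // Closed u} =>
        Quot.mk SimH (subst F 0 u.1)).Subsingleton := by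
  obtain ⟨t', hFt', ht'⟩ := h
  refine ⟨fun u v _ _ => simH_subst_of_boSteps hFt' ht' u v, ?_⟩
  rintro _ ⟨u, rfl⟩ _ ⟨v, rfl⟩
  exact Quot.sound (simH_subst_of_boSteps hFt' ht' u.1 v.1)

open Lam in
/-- if `λx.F` is closed and `x ∉ βΩ(F)` (some `▷_{βΩ}*`-reduct of `F`
does not contain `x`), then `F[x:=u] ≃ F[x:=v]` for all closed `u, v`; hence the range
of `λx.F` in H (the set of `≃`-classes of the `F[x:=u]`, `u` closed) is a singleton. -/
theorem range_singleton (F : Lam) (hcl : Closed (Lam.abs F))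
    (h : ∃ t', BOSteps F t' ∧ ¬ Free 0 t') :
    (∀ u v, Closed u → Closed v → SimH (subst F 0 u) (subst F 0 v)) ∧
    (Set.range fun u : {u : Lam // Closed u} =>
        Quot.mk SimH (subst F 0 u.1)).Subsingleton :=
  range_singleton_general F h
end

section
/- In the λJ-calculus: if a ⤳ a' and b ⤳ b', then a[x:=b] ⤳* a'[x:=b']. -/
/-! ## The λJ-calculus: the untyped λ-calculus extended with a constant `J` and a
distinguished (never bound) variable `ν`, in de Bruijn representation. -/

/-- Terms of the λJ-calculus. -/
inductive JTm : Type where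
  | var : ℕ → JTm
  | jc : JTm            -- the constant `J`
  | nu : JTm            -- the distinguished variable `ν`
  | app : JTm → JTm → JTm
  | abs : JTm → JTm
  deriving DecidableEq

namespace JTm

/-- Lifting of de Bruijn indices (cutoff `d`). -/
def lift (d : ℕ) : JTm → JTm
  | var n => if n < d then var n else var (n + 1)
  | jc => jc
  | nu => nu
  | app a b => app (lift d a) (lift d b)
  | abs a => abs (lift (d + 1) a)

/-- Capture-avoiding substitution of `u` for the variable `k`. -/
def subst : JTm → ℕ → JTm → JTm
  | var n, k, u => if n = k then u else if k < n then var (n - 1) else var n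
  | jc, _, _ => jc
  | nu, _, _ => nu
  | app a b, k, u => app (subst a k u) (subst b k u)
  | abs a, k, u => abs (subst a (k + 1) (lift 0 u))

/-- `n`-fold lifting. -/
def liftN (n : ℕ) (t : JTm) : JTm := (lift 0)^[n] t

/-- `n`-fold abstraction `λy₁…λyₙ.t`. -/
def absN : ℕ → JTm → JTm
  | 0, t => t
  | n + 1, t => abs (absN n t)

/-- Application of a head to a list of arguments. -/
def mkApps (h : JTm) (as : List JTm) : JTm := as.foldl app h

/-- The right-hand side `λy₁…λy_p.(u (J ν y₁) … (J ν y_p))` of the `J`-rule. -/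
def jRhs (p : ℕ) (u : JTm) : JTm :=
  absN p (mkApps (liftN p u) ((List.range p).reverse.map fun i => app (app jc nu) (var i)))

/-- One-step reduction `▷` of the λJ-calculus: β-reduction together with the rule
`(J ν u) ▷ λy₁…λy_p.(u (J ν y₁) … (J ν y_p))`. -/
inductive Step (p : ℕ) : JTm → JTm → Prop
  | beta (a b : JTm) : Step p (app (abs a) b) (subst a 0 b)
  | jrule (u : JTm) : Step p (app (app jc nu) u) (jRhs p u)
  | appL {a a' : JTm} (b : JTm) : Step p a a' → Step p (app a b) (app a' b)
  | appR (a : JTm) {b b' : JTm} : Step p b b' → Step p (app a b) (app a b')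
  | abs {a a' : JTm} : Step p a a' → Step p (JTm.abs a) (JTm.abs a')

/-- `▷*`. -/
def Steps (p : ℕ) : JTm → JTm → Prop := Relation.ReflTransGen (Step p)

/-- `EJ p u e` : `e ∈ E_u`, the least set of terms containing `u` and closed under
`e ↦ (J ν e)` and `e ↦ λy⃗.(e e⃗_y)`, where `y⃗` is a sequence of (fresh) variables and
each component of `e⃗_y` lies in `E_y` for the corresponding variable `y` of `y⃗`
(in de Bruijn style, `λy⃗` of length `n` binds the indices `n-1, …, 0` and `e` is
lifted accordingly). -/
inductive EJ (p : ℕ) : JTm → JTm → Prop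
  | base (u : JTm) : EJ p u u
  | jnu {u e : JTm} : EJ p u e → EJ p u (app (app jc nu) e)
  | lamApp {u e : JTm} (n : ℕ) (as : List JTm) :
      EJ p u e →
      List.Forall₂ (fun i a => EJ p (var i) a) (List.range n).reverse as →
      EJ p u (absN n (mkApps (liftN n e) as))

/-- `t ⤳ t'` : `t = C[u]` and `t' = C[u']` for a one-hole context `C` and `u' ∈ E_u`. -/
inductive Leads (p : ℕ) : JTm → JTm → Prop
  | base {u u' : JTm} : EJ p u u' → Leads p u u'
  | appL {a a' : JTm} (b : JTm) : Leads p a a' → Leads p (app a b) (app a' b)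
  | appR (a : JTm) {b b' : JTm} : Leads p b b' → Leads p (app a b) (app a b')
  | abs {a a' : JTm} : Leads p a a' → Leads p (JTm.abs a) (JTm.abs a')

/-- `⤳*`. -/
def LeadsStar (p : ℕ) : JTm → JTm → Prop := Relation.ReflTransGen (Leads p)

/-- A variable applied to a (possibly empty) list of arguments. -/
inductive HeadVarApp : JTm → Prop
  | var (n : ℕ) : HeadVarApp (var n)
  | app {a : JTm} (b : JTm) : HeadVarApp a → HeadVarApp (app a b)

/-- Head normal forms `λx₁…λxₙ.(y t₁ … tₘ)`. -/
inductive IsHNF : JTm → Prop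
  | head {t : JTm} : HeadVarApp t → IsHNF t
  | abs {a : JTm} : IsHNF a → IsHNF (JTm.abs a)

/-- Solvability in the λJ-calculus. -/
def Solvable (p : ℕ) (t : JTm) : Prop := ∃ h, Steps p t h ∧ IsHNF h

/-- `ν` occurs nicely in `t` : every occurrence of `ν` is inside a subterm `(J ν)`. -/
def Nice : JTm → Prop
  | app jc nu => True
  | app a b => Nice a ∧ Nice b
  | abs a => Nice a
  | nu => False
  | _ => True

/-- `ν` occurs in `t`. -/
def HasNu : JTm → Prop
  | nu => True
  | app a b => HasNu a ∨ HasNu b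
  | abs a => HasNu a
  | _ => False

/-- `ν` occurs correctly in `t` : `ν` occurs nicely in `t` and `t` has a head normal
form of the shape `λx⃗.(x c⃗ e⃗_y)` where `y⃗` is a final subsequence of `x⃗` of length
`k ≥ 1` (the `k` innermost binders, i.e. the de Bruijn indices `k-1, …, 0`), each
component of `e⃗_y` is in `E_y`, and `ν` occurs in `e⃗_y`. -/
def Correct (p : ℕ) (t : JTm) : Prop :=
  Nice t ∧ ∃ (n m k : ℕ) (cs es : List JTm),
    1 ≤ k ∧ es.length = k ∧ k ≤ n ∧
    Steps p t (absN n (mkApps (var m) (cs ++ es))) ∧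
    List.Forall₂ (fun i e => EJ p (var i) e) (List.range k).reverse es ∧
    ∃ e ∈ es, HasNu e

/-- `t` contains no subterm of the form `(ν u)`. -/
def NoNuApp : JTm → Prop
  | app a b => a ≠ nu ∧ NoNuApp a ∧ NoNuApp b
  | abs a => NoNuApp a
  | _ => True

end JTm

/-! Substitution is monotone for `⤳` in each argument separately. On the left, every `E_u` is
stable under lifting and substitution: the variables `y⃗` of a rule `e ↦ λy⃗.(e e⃗_y)` are bound
there, so lifting or substituting at a cutoff outside them leaves each `E_y` in place. On the
right, `a'[x:=b] ⤳* a'[x:=b']` by rewriting the occurrences of `x` one at a time. -/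

namespace JTm

theorem lift_lift (t : JTm) {i j : ℕ} (hij : i ≤ j) :
    lift i (lift j t) = lift (j + 1) (lift i t) := by
  induction t generalizing i j with
  | var n => simp only [lift]; split_ifs <;> simp only [lift] <;> split_ifs <;> simp <;> omega
  | jc | nu => rfl
  | app a b iha ihb => simp [lift, iha hij, ihb hij]
  | abs a iha => simp [lift, iha (Nat.succ_le_succ hij)]

theorem subst_lift (t u : JTm) {d k : ℕ} (hdk : d ≤ k) :
    subst (lift d t) (k + 1) (lift d u) = lift d (subst t k u) := by
  induction t generalizing d k u with
  | var n =>
      simp only [lift, subst]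
      split_ifs <;> simp only [lift, subst] <;> split_ifs <;> simp_all <;> omega
  | jc | nu => rfl
  | app a b iha ihb => simp [lift, subst, iha u hdk, ihb u hdk]
  | abs a iha => simp [lift, subst, lift_lift u (Nat.zero_le d), iha _ (Nat.succ_le_succ hdk)]

theorem liftN_succ (n : ℕ) (t : JTm) : liftN (n + 1) t = lift 0 (liftN n t) :=
  Function.iterate_succ_apply' _ _ _

theorem liftN_succ' (n : ℕ) (t : JTm) : liftN (n + 1) t = liftN n (lift 0 t) :=
  Function.iterate_succ_apply _ _ _

theorem lift_liftN (n d : ℕ) (t : JTm) : lift (d + n) (liftN n t) = liftN n (lift d t) := by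
  induction n with
  | zero => rfl
  | succ n ih => rw [liftN_succ, liftN_succ, ← add_assoc, ← lift_lift _ (Nat.zero_le _), ih]

theorem subst_liftN (n k : ℕ) (t u : JTm) :
    subst (liftN n t) (k + n) (liftN n u) = liftN n (subst t k u) := by
  induction n with
  | zero => rfl
  | succ n ih =>
      rw [liftN_succ, liftN_succ, liftN_succ, ← add_assoc, subst_lift _ _ (Nat.zero_le _), ih]

theorem lift_absN (n d : ℕ) (t : JTm) : lift d (absN n t) = absN n (lift (d + n) t) := by
  induction n generalizing d with
  | zero => rfl
  | succ n ih => simp only [absN, lift, ih, Nat.add_right_comm d 1 n, add_assoc]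

theorem subst_absN (n k : ℕ) (t u : JTm) :
    subst (absN n t) k u = absN n (subst t (k + n) (liftN n u)) := by
  induction n generalizing k u with
  | zero => rfl
  | succ n ih => simp only [absN, subst, ih, ← liftN_succ', Nat.add_right_comm k 1 n, add_assoc]

theorem lift_mkApps (d : ℕ) (h : JTm) (as : List JTm) :
    lift d (mkApps h as) = mkApps (lift d h) (as.map (lift d)) := by
  induction as generalizing h with
  | nil => rfl
  | cons a as ih => exact ih (app h a)

theorem subst_mkApps (k : ℕ) (h u : JTm) (as : List JTm) :
    subst (mkApps h as) k u = mkApps (subst h k u) (as.map (subst · k u)) := by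
  induction as generalizing h with
  | nil => rfl
  | cons a as ih => exact ih (app h a)

theorem lift_var_of_lt {i d : ℕ} (h : i < d) : lift d (var i) = var i := by
  simp [lift, h]

theorem subst_var_of_lt {i k : ℕ} (h : i < k) (u : JTm) : subst (var i) k u = var i := by
  simp [subst, h.ne, h.not_gt]

@[elab_as_elim]
theorem EJ.rec_forall₂ {p : ℕ} {motive : (u e : JTm) → EJ p u e → Prop}
    (base : ∀ u, motive u u (.base u))
    (jnu : ∀ {u e} (h : EJ p u e), motive u e h → motive u _ h.jnu)
    (lamApp : ∀ {u e} (n : ℕ) (as : List JTm) (h : EJ p u e)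
      (hs : List.Forall₂ (fun i a => EJ p (var i) a) (List.range n).reverse as),
      motive u e h →
      List.Forall₂ (fun i a => ∃ h, motive (var i) a h) (List.range n).reverse as →
      motive u _ (.lamApp n as h hs))
    {u e : JTm} (h : EJ p u e) : motive u e h :=
  EJ.rec (motive_1 := motive)
    (motive_2 := fun l₁ l₂ _ => List.Forall₂ (fun i a => ∃ h, motive (var i) a h) l₁ l₂)
    base jnu lamApp .nil (fun hd _ ihd ihs => .cons ⟨hd, ihd⟩ ihs) h

theorem forall₂_range_reverse_and_lt {α : Type*} {n : ℕ} {l : List α} {P : ℕ → α → Prop}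
    (h : List.Forall₂ P (List.range n).reverse l) :
    List.Forall₂ (fun i a => i < n ∧ P i a) (List.range n).reverse l :=
  (List.forall₂_and_left _ _).2 ⟨by simp, h⟩

theorem EJ.lift {p : ℕ} {u e : JTm} (h : EJ p u e) (d : ℕ) :
    EJ p (JTm.lift d u) (JTm.lift d e) := by
  induction h using EJ.rec_forall₂ generalizing d with
  | base u => exact EJ.base _
  | jnu _ ih => exact EJ.jnu (ih d)
  | lamApp n as _ _ ih ihs =>
      rw [lift_absN, lift_mkApps, lift_liftN]
      refine EJ.lamApp n _ (ih d) (List.forall₂_map_right_iff.2 ?_)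
      refine (forall₂_range_reverse_and_lt ihs).imp fun i a ⟨hi, _, iha⟩ => ?_
      simpa only [lift_var_of_lt (show i < d + n by omega)] using iha (d + n)

theorem EJ.subst {p : ℕ} {u e : JTm} (h : EJ p u e) (k : ℕ) (b : JTm) :
    EJ p (JTm.subst u k b) (JTm.subst e k b) := by
  induction h using EJ.rec_forall₂ generalizing k b with
  | base u => exact EJ.base _
  | jnu _ ih => exact EJ.jnu (ih k b)
  | lamApp n as _ _ ih ihs =>
      rw [subst_absN, subst_mkApps, subst_liftN]
      refine EJ.lamApp n _ (ih k b) (List.forall₂_map_right_iff.2 ?_)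
      refine (forall₂_range_reverse_and_lt ihs).imp fun i a ⟨hi, _, iha⟩ => ?_
      simpa only [subst_var_of_lt (show i < k + n by omega)] using iha (k + n) (liftN n b)

theorem Leads.lift {p : ℕ} {b b' : JTm} (h : Leads p b b') (d : ℕ) :
    Leads p (JTm.lift d b) (JTm.lift d b') := by
  induction h generalizing d with
  | base he => exact Leads.base (he.lift d)
  | appL c _ ih => exact Leads.appL _ (ih d)
  | appR c _ ih => exact Leads.appR _ (ih d)
  | abs _ ih => exact Leads.abs (ih (d + 1))

theorem Leads.subst {p : ℕ} {a a' : JTm} (h : Leads p a a') (k : ℕ) (b : JTm) :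
    Leads p (JTm.subst a k b) (JTm.subst a' k b) := by
  induction h generalizing k b with
  | base he => exact Leads.base (he.subst k b)
  | appL c _ ih => exact Leads.appL _ (ih k b)
  | appR c _ ih => exact Leads.appR _ (ih k b)
  | abs _ ih => exact Leads.abs (ih (k + 1) (JTm.lift 0 b))

theorem LeadsStar.app {p : ℕ} {a a' b b' : JTm} (ha : LeadsStar p a a')
    (hb : LeadsStar p b b') : LeadsStar p (app a b) (app a' b') :=
  (ha.lift (JTm.app · b) fun _ _ => Leads.appL b).trans
    (hb.lift (JTm.app a') fun _ _ => Leads.appR a')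

theorem LeadsStar.abs {p : ℕ} {a a' : JTm} (h : LeadsStar p a a') :
    LeadsStar p (abs a) (abs a') :=
  h.lift JTm.abs fun _ _ => Leads.abs

theorem leadsStar_subst_of_leads (t : JTm) (k : ℕ) {p : ℕ} {b b' : JTm} (h : Leads p b b') :
    LeadsStar p (subst t k b) (subst t k b') := by
  induction t generalizing k b b' with
  | var n =>
      simp only [subst]
      split_ifs
      exacts [.single h, .refl, .refl]
  | jc | nu => exact .refl
  | app a c iha ihc => exact (iha k h).app (ihc k h)
  | abs a iha => exact (iha (k + 1) (h.lift 0)).abs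

end JTm

open JTm in
theorem leads_subst_general (p : ℕ) (a a' b b' : JTm) (x : ℕ)
    (ha : Leads p a a') (hb : Leads p b b') :
    LeadsStar p (subst a x b) (subst a' x b') :=
  .head (ha.subst x b) (leadsStar_subst_of_leads a' x hb)

open JTm in
/-- in the λJ-calculus, if `a ⤳ a'` and `b ⤳ b'`, then
`a[x:=b] ⤳* a'[x:=b']`. -/
theorem leads_subst (p : ℕ) (hp : 1 ≤ p) (a a' b b' : JTm) (x : ℕ)
    (ha : Leads p a a') (hb : Leads p b b') :
    LeadsStar p (subst a x b) (subst a' x b') :=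
  leads_subst_general p a a' b b' x ha hb
end

section
/- In the λJ-calculus, if ν occurs nicely in a term t, then ν is never applied in any reduct of t: no term t' with t ▷* t' contains a subterm of the form (ν u). -/
namespace JTm

lemma nice_app_iff (a b : JTm) :
    Nice (app a b) ↔ ((a = jc ∧ b = nu) ∨ (Nice a ∧ Nice b)) := by
  cases a <;> cases b <;> simp [Nice]

lemma nice_app_of {a b : JTm} (ha : Nice a) (hb : Nice b) : Nice (app a b) :=
  (nice_app_iff a b).2 (Or.inr ⟨ha, hb⟩)

lemma nice_lift {t : JTm} (h : Nice t) (d : ℕ) : Nice (lift d t) := by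
  induction t generalizing d with
  | var n => simp only [lift]; split <;> trivial
  | jc => exact h
  | nu => exact h.elim
  | app a b iha ihb =>
    rcases (nice_app_iff a b).1 h with ⟨rfl, rfl⟩ | ⟨ha, hb⟩
    · exact trivial
    · exact nice_app_of (iha ha _) (ihb hb _)
  | abs a ih => exact ih h _

lemma nice_subst {t u : JTm} (h : Nice t) (hu : Nice u) (k : ℕ) :
    Nice (subst t k u) := by
  induction t generalizing u k with
  | var n =>
    simp only [subst]; split
    · exact hu
    · split <;> trivial
  | jc => exact h
  | nu => exact h.elim
  | app a b iha ihb =>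
    rcases (nice_app_iff a b).1 h with ⟨rfl, rfl⟩ | ⟨ha, hb⟩
    · exact trivial
    · exact nice_app_of (iha ha hu _) (ihb hb hu _)
  | abs a ih => exact ih h (nice_lift hu 0) _

lemma nice_liftN {t : JTm} (h : Nice t) (n : ℕ) : Nice (liftN n t) := by
  induction n with
  | zero => exact h
  | succ n ih =>
    rw [liftN, Function.iterate_succ_apply']
    exact nice_lift ih 0

lemma nice_absN {t : JTm} (h : Nice t) (n : ℕ) : Nice (absN n t) := by
  induction n with
  | zero => exact h
  | succ n ih => exact ih

lemma nice_mkApps {h : JTm} (hh : Nice h) {as : List JTm}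
    (ha : ∀ a ∈ as, Nice a) : Nice (mkApps h as) := by
  induction as generalizing h with
  | nil => exact hh
  | cons a as ih =>
    exact ih (nice_app_of hh (ha a (by simp))) fun x hx => ha x (by simp [hx])

lemma nice_step {p : ℕ} {t t' : JTm} (hs : Step p t t') (h : Nice t) : Nice t' := by
  induction hs with
  | beta a b =>
    rcases (nice_app_iff _ _).1 h with ⟨h1, _⟩ | ⟨ha, hb⟩
    · exact absurd h1 (by simp)
    · exact nice_subst (show Nice a from ha) hb 0
  | jrule u =>
    rcases (nice_app_iff _ _).1 h with ⟨h1, _⟩ | ⟨_, hu⟩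
    · exact absurd h1 (by simp)
    unfold jRhs
    refine nice_absN (nice_mkApps (nice_liftN hu _) ?_) _
    intro a ha
    simp only [List.mem_map] at ha
    obtain ⟨i, _, rfl⟩ := ha
    exact nice_app_of trivial trivial
  | appL b hs ih =>
    rcases (nice_app_iff _ _).1 h with ⟨rfl, rfl⟩ | ⟨ha, hb⟩
    · cases hs
    · exact nice_app_of (ih ha) hb
  | appR a hs ih =>
    rcases (nice_app_iff _ _).1 h with ⟨rfl, rfl⟩ | ⟨ha, hb⟩
    · cases hs
    · exact nice_app_of ha (ih hb)
  | abs hs ih => exact ih h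

lemma noNuApp_of_nice {t : JTm} (h : Nice t) : NoNuApp t := by
  induction t with
  | var n => trivial
  | jc => trivial
  | nu => exact h.elim
  | app a b iha ihb =>
    rcases (nice_app_iff a b).1 h with ⟨rfl, rfl⟩ | ⟨ha, hb⟩
    · exact ⟨by simp, trivial, trivial⟩
    · refine ⟨?_, iha ha, ihb hb⟩
      rintro rfl; exact ha
  | abs a ih => exact ih h

end JTm

open JTm in
/-- in the λJ-calculus, if `ν` occurs nicely in `t`, then `ν` is never
applied in any reduct of `t` : no `t'` with `t ▷* t'` contains a subterm `(ν u)`. -/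
theorem nu_never_applied (p : ℕ) (hp : 1 ≤ p) (t : JTm) (h : Nice t) :
    ∀ t', Steps p t t' → NoNuApp t' := by
  intro t' hst
  refine noNuApp_of_nice ?_
  induction hst with
  | refl => exact h
  | tail _ hs ih => exact nice_step hs ih
end
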